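/- Let T be a Toeplitz operator on ℓ²(ℕ, ℂ) with symbol coefficients φ_k (k ∈ ℤ), and let C be a conjugation on ℓ²(ℕ, ℂ) corresponding to an orthonormal basis {f_n}_{n∈ℕ} (i.e., C f_n = f_n for all n). Define c_{n,m} := Σ_{k=0}^∞ ⟨f_k, e_n⟩ · ⟨f_k, e_m⟩ for m, n ∈ ℕ (so c_{n,m} = ⟨C e_n, e_m⟩). Then T is C-symmetric (C T* C = T) if and only if for all j, k ∈ ℕ: Σ_{n=0}^∞ conj(φ_{n−k}) · c_{n,j} = Σ_{n=1}^∞ conj(φ_n) · c_{k,n+j} + Σ_{l=0}^{j} conj(φ_{−l}) · c_{k,j−l}, where all infinite series converge. -/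

import Mathlib

noncomputable section
open scoped ComplexConjugate
open ContinuousLinearMap

/-- A conjugation on a complex Hilbert space: an antilinear, involutive, isometric map. -/
def IsConjugation {E : Type*} [NormedAddCommGroup E] [InnerProductSpace ℂ E] (C : E → E) : Prop :=
  (∀ (a : ℂ) (f g : E), C (a • f + g) = conj a • C f + C g) ∧
  (∀ f, C (C f) = f) ∧
  (∀ f, ‖C f‖ = ‖f‖)

/-- The inner product in the paper's convention: linear in the first argument and
conjugate-linear in the second (Mathlib's `inner` with the arguments swapped). -/
def ip {E : Type*} [NormedAddCommGroup E] [InnerProductSpace ℂ E] (x y : E) : ℂ :=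
  inner ℂ y x

/-- `ℓ²(ℕ, ℂ)`, identified with the Hardy space `H²(𝔻)` via Taylor coefficients. -/
abbrev Ell2 : Type := lp (fun _ : ℕ => ℂ) 2

/-- The standard orthonormal basis of `ℓ²(ℕ, ℂ)`. -/
def e (n : ℕ) : Ell2 := lp.single 2 n 1

/-!
Since `C` is an involution, `C T* C = T` says `T* C = C T`. Both sides are continuous and
antilinear, so it suffices to compare them on the basis vectors `e_j`, coordinate by coordinate;
as `⟨C x, C y⟩ = ⟨y, x⟩`, this is the symmetry of the matrix `⟨C e_j, T e_k⟩` in `j, k`.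
Parseval's identity in the basis `{f_n}` fixed by `C` identifies `c_{n,m}` with the coordinates
of `C e_n`, so expanding that matrix entry in coordinates gives the two sides of the equation,
the right-hand side being split at the index `j`.
-/

open scoped InnerProductSpace

namespace IsConjugation

variable {E : Type*} [NormedAddCommGroup E] [InnerProductSpace ℂ E] {C : E → E}

theorem norm_add_smul (hC : IsConjugation C) (a : ℂ) (x y : E) :
    ‖C x + a • C y‖ = ‖x + conj a • y‖ := by
  rw [← hC.2.2 (x + conj a • y), add_comm x, hC.1, Complex.conj_conj, add_comm]

theorem inner_apply_apply (hC : IsConjugation C) (x y : E) : ⟪C x, C y⟫_ℂ = ⟪y, x⟫_ℂ := by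
  have h1 : ‖C x + C y‖ = ‖y + x‖ := by simpa [add_comm] using hC.norm_add_smul 1 x y
  have h2 : ‖C x - C y‖ = ‖y - x‖ := by
    simpa [← sub_eq_add_neg, norm_sub_rev] using hC.norm_add_smul (-1) x y
  have h3 : ‖C x - Complex.I • C y‖ = ‖y - Complex.I • x‖ :=
    calc ‖C x - Complex.I • C y‖ = ‖x + conj (-Complex.I) • y‖ := by
          rw [← hC.norm_add_smul, neg_smul, sub_eq_add_neg]
      _ = ‖Complex.I • (y - Complex.I • x)‖ := by
          congr 1
          rw [map_neg, Complex.conj_I, neg_neg, smul_sub, smul_smul, Complex.I_mul_I]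
          module
      _ = ‖y - Complex.I • x‖ := by rw [norm_smul, Complex.norm_I, one_mul]
  have h4 : ‖C x + Complex.I • C y‖ = ‖y + Complex.I • x‖ :=
    calc ‖C x + Complex.I • C y‖ = ‖x + conj Complex.I • y‖ := hC.norm_add_smul _ _ _
      _ = ‖(-Complex.I) • (y + Complex.I • x)‖ := by
          congr 1
          rw [Complex.conj_I, smul_add, smul_smul, neg_mul, Complex.I_mul_I]
          module
      _ = ‖y + Complex.I • x‖ := by rw [norm_smul, norm_neg, Complex.norm_I, one_mul]
  rw [inner_eq_sum_norm_sq_div_four, inner_eq_sum_norm_sq_div_four, h1, h2]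
  simp only [RCLike.I_to_complex, h3, h4]

theorem inner_apply_right (hC : IsConjugation C) (x y : E) : ⟪x, C y⟫_ℂ = ⟪y, C x⟫_ℂ := by
  rw [← hC.inner_apply_apply (C y) x, hC.2.1]

theorem tsum_inner_mul_inner_of_apply_eq {ι : Type*} (hC : IsConjugation C)
    (f : HilbertBasis ι ℂ E) (hf : ∀ i, C (f i) = f i) (x y : E) :
    ∑' i, ⟪x, f i⟫_ℂ * ⟪y, f i⟫_ℂ = ⟪x, C y⟫_ℂ := by
  rw [← f.tsum_inner_mul_inner x (C y)]
  refine tsum_congr fun i => congrArg _ ?_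
  rw [← hC.inner_apply_apply, hf]

theorem map_zero (hC : IsConjugation C) : C 0 = 0 :=
  norm_eq_zero.mp ((hC.2.2 0).trans norm_zero)

def toLinearIsometryEquiv (hC : IsConjugation C) : E ≃ₗᵢ⋆[ℂ] E where
  toFun := C
  invFun := C
  map_add' x y := by simpa using hC.1 1 x y
  map_smul' a x := by simpa [hC.map_zero] using hC.1 a x 0
  left_inv := hC.2.1
  right_inv := hC.2.1
  norm_map' := hC.2.2

end IsConjugation

theorem HilbertBasis.ext_inner_left_iff {ι 𝕜 E : Type*} [RCLike 𝕜] [NormedAddCommGroup E]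
    [InnerProductSpace 𝕜 E] (b : HilbertBasis ι 𝕜 E) {u v : E} :
    u = v ↔ ∀ i, ⟪b i, u⟫_𝕜 = ⟪b i, v⟫_𝕜 :=
  ⟨fun h _ => h ▸ rfl, fun h =>
    b.repr.injective (lp.ext (funext fun i => by simp only [b.repr_apply_apply, h]))⟩

def IsCSymmetric {E : Type*} [NormedAddCommGroup E] [InnerProductSpace ℂ E] [CompleteSpace E]
    (C : E → E) (T : E →L[ℂ] E) : Prop :=
  ∀ x, C (adjoint T (C x)) = T x

theorem IsConjugation.isCSymmetric_iff_inner_symm {ι E : Type*} [NormedAddCommGroup E]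
    [InnerProductSpace ℂ E] [CompleteSpace E] {C : E → E} (hC : IsConjugation C)
    (b : HilbertBasis ι ℂ E) (T : E →L[ℂ] E) :
    IsCSymmetric C T ↔ ∀ j k, ⟪T (b k), C (b j)⟫_ℂ = ⟪T (b j), C (b k)⟫_ℂ := by
  let D : E →L⋆[ℂ] E := hC.toLinearIsometryEquiv.toContinuousLinearEquiv
  have intertwine : IsCSymmetric C T ↔ ∀ x, adjoint T (C x) = C (T x) :=
    forall_congr' fun x => ⟨fun h => by rw [← h, hC.2.1], fun h => by rw [h, hC.2.1]⟩
  have on_basis : (∀ x, adjoint T (C x) = C (T x)) ↔ ∀ j, adjoint T (C (b j)) = C (T (b j)) := by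
    refine ⟨fun h j => h (b j), fun h => ?_⟩
    have hdense := Submodule.dense_iff_topologicalClosure_eq_top.mpr b.dense_span
    have : (adjoint T).comp D = D.comp T :=
      ContinuousLinearMap.ext_on hdense (by rintro _ ⟨j, rfl⟩; exact h j)
    exact fun x => congr($this x)
  rw [intertwine, on_basis]
  refine forall_congr' fun j => (b.ext_inner_left_iff).trans (forall_congr' fun k => ?_)
  rw [adjoint_inner_right, hC.inner_apply_right (b k) (T (b j))]

theorem tsum_eq_tsum_add_sum_range_reflect {G : Type*} [AddCommGroup G] [TopologicalSpace G]
    [IsTopologicalAddGroup G] [T2Space G] {g : ℕ → G} (hg : Summable g) (j : ℕ) :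
    ∑' p, g p = ∑' n, g (n + 1 + j) + ∑ l ∈ Finset.range (j + 1), g (j - l) := by
  rw [← hg.sum_add_tsum_nat_add (j + 1), add_comm, ← Finset.sum_range_reflect g (j + 1)]
  simp only [add_tsub_cancel_right, add_comm 1 j, add_assoc]

def ell2Basis : HilbertBasis ℕ ℂ Ell2 := HilbertBasis.ofRepr (LinearIsometryEquiv.refl ℂ Ell2)

theorem ell2Basis_apply (n : ℕ) : ell2Basis n = e n := (ell2Basis.repr_symm_single n).symm

theorem inner_e_left (n : ℕ) (x : Ell2) : ⟪e n, x⟫_ℂ = x n := by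
  rw [← ell2Basis_apply, ← ell2Basis.repr_apply_apply]; rfl

theorem inner_ell2_eq_tsum (x y : Ell2) : ⟪x, y⟫_ℂ = ∑' p, conj (x p) * y p := by
  simp only [lp.inner_eq_tsum, RCLike.inner_apply']

theorem summable_conj_mul_ell2 (x y : Ell2) : Summable fun p => conj (x p) * y p := by
  simpa only [RCLike.inner_apply'] using lp.summable_inner (𝕜 := ℂ) x y

theorem c_symmetric_iff_coefficient_equations_general
    (T : Ell2 →L[ℂ] Ell2)
    (φ : ℤ → ℂ) (hφ : ∀ m n : ℕ, φ ((m : ℤ) - (n : ℤ)) = ip (T (e n)) (e m))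
    (C : Ell2 → Ell2) (hC : IsConjugation C)
    (f : HilbertBasis ℕ ℂ Ell2) (hf : ∀ n, C (f n) = f n)
    (c : ℕ → ℕ → ℂ)
    (hc : ∀ n m : ℕ, c n m = ∑' k : ℕ, ip (f k) (e n) * ip (f k) (e m)) :
    (∀ x, C (adjoint T (C x)) = T x) ↔
      ∀ j k : ℕ,
        ∑' n : ℕ, conj (φ ((n : ℤ) - (k : ℤ))) * c n j =
          (∑' n : ℕ, conj (φ ((n : ℤ) + 1)) * c k (n + 1 + j)) +
            ∑ l ∈ Finset.range (j + 1), conj (φ (-(l : ℤ))) * c k (j - l) := by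
  have hTe : ∀ m n : ℕ, T (e n) m = φ (m - n) := fun m n => by rw [hφ, ip, inner_e_left]
  have hCe : ∀ n m : ℕ, C (e n) m = c n m := fun n m => by
    rw [hc, ← inner_e_left, hC.inner_apply_right, ← hC.tsum_inner_mul_inner_of_apply_eq f hf]
    rfl
  have hc_comm : ∀ n m : ℕ, c n m = c m n := fun n m => by simp only [hc, mul_comm]
  have expand : ∀ a b : ℕ, ⟪T (e a), C (e b)⟫_ℂ = ∑' p : ℕ, conj (φ (p - a)) * c b p :=
    fun a b => by simp only [inner_ell2_eq_tsum, hTe, hCe]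
  have hsum : ∀ a b : ℕ, Summable fun p : ℕ => conj (φ (p - a)) * c b p := fun a b => by
    simpa only [hTe, hCe] using summable_conj_mul_ell2 (T (e a)) (C (e b))
  refine (hC.isCSymmetric_iff_inner_symm ell2Basis T).trans (forall₂_congr fun j k => ?_)
  rw [ell2Basis_apply, ell2Basis_apply, expand, expand,
    tsum_eq_tsum_add_sum_range_reflect (hsum j k) j]
  have tail (n : ℕ) : ((n + 1 + j : ℕ) : ℤ) - j = n + 1 := by push_cast; ring
  have head (l : ℕ) (hl : l ∈ Finset.range (j + 1)) : ((j - l : ℕ) : ℤ) - j = -l := by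
    rw [Nat.cast_sub (Nat.lt_succ_iff.mp (Finset.mem_range.mp hl))]; ring
  simp only [tail, hc_comm j]
  rw [Finset.sum_congr rfl fun l hl => by rw [head l hl]]

/-- Let `T` be a Toeplitz operator on `ℓ²(ℕ, ℂ)` with symbol coefficients
`φ_k`, and `C` a conjugation corresponding to an orthonormal basis `{f_n}` (`C f_n = f_n`).
With `c_{n,m} := Σ_k ⟨f_k, e_n⟩⟨f_k, e_m⟩ (= ⟨C e_n, e_m⟩)`, the operator `T` is `C`-symmetric
if and only if for all `j, k ∈ ℕ`:
`Σ_{n≥0} conj(φ_{n−k}) c_{n,j} = Σ_{n≥1} conj(φ_n) c_{k,n+j} + Σ_{l=0}^{j} conj(φ_{−l}) c_{k,j−l}`. -/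
theorem c_symmetric_iff_coefficient_equations
    (S₀ T : Ell2 →L[ℂ] Ell2) (hS₀ : ∀ n, S₀ (e n) = e (n + 1))
    (hT : (adjoint S₀).comp (T.comp S₀) = T)
    (φ : ℤ → ℂ) (hφ : ∀ m n : ℕ, φ ((m : ℤ) - (n : ℤ)) = ip (T (e n)) (e m))
    (C : Ell2 → Ell2) (hC : IsConjugation C)
    (f : HilbertBasis ℕ ℂ Ell2) (hf : ∀ n, C (f n) = f n)
    (c : ℕ → ℕ → ℂ)
    (hc : ∀ n m : ℕ, c n m = ∑' k : ℕ, ip (f k) (e n) * ip (f k) (e m)) :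
    (∀ x, C (adjoint T (C x)) = T x) ↔
      ∀ j k : ℕ,
        ∑' n : ℕ, conj (φ ((n : ℤ) - (k : ℤ))) * c n j =
          (∑' n : ℕ, conj (φ ((n : ℤ) + 1)) * c k (n + 1 + j)) +
            ∑ l ∈ Finset.range (j + 1), conj (φ (-(l : ℤ))) * c k (j - l) :=
  c_symmetric_iff_coefficient_equations_general T φ hφ C hC f hf c hc
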